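/- arXiv:1201.1847 — 3 statements merged into one kernel-verified Lean document; each statement's English description precedes it below -/
import Mathlib

section
/- Suppose B satisfies sup_{w ∈ W, w ≠ 0} B(w,u)/‖w‖_W ≥ C₃‖u‖_U for all u ∈ U with C₃ > 0. Then the bilinear form A(v,u) := ⟨Tv, Tu⟩_W is coercive: A(u,u) ≥ C₃²‖u‖_U² for all u ∈ U. -/
open scoped RealInnerProductSpace

theorem iSup_inner_div_norm_le {E : Type*} [NormedAddCommGroup E] [InnerProductSpace ℝ E]
    (v : E) : ⨆ w : {w : E // w ≠ 0}, ⟪w.1, v⟫ / ‖w.1‖ ≤ ‖v‖ :=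
  Real.iSup_le (fun w => div_le_of_le_mul₀ (norm_nonneg _) (norm_nonneg _)
    (by rw [mul_comm]; exact real_inner_le_norm _ _)) (norm_nonneg _)

theorem stmt3_general {U W : Type*}
    [NormedAddCommGroup U] [InnerProductSpace ℝ U]
    [NormedAddCommGroup W] [InnerProductSpace ℝ W]
    (B : W →ₗ[ℝ] U →ₗ[ℝ] ℝ) (C₃ : ℝ) (hC₃ : 0 < C₃)
    (hinfsup : ∀ u : U, C₃ * ‖u‖ ≤ ⨆ w : {w : W // w ≠ 0}, B w.1 u / ‖w.1‖)
    (T : U → W) (hT : ∀ (w : W) (u : U), ⟪w, T u⟫ = B w u) :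
    ∀ u : U, C₃ ^ 2 * ‖u‖ ^ 2 ≤ ⟪T u, T u⟫ := by
  intro u
  have hlower : C₃ * ‖u‖ ≤ ‖T u‖ :=
    (hinfsup u).trans (by simpa only [hT] using iSup_inner_div_norm_le (T u))
  rw [real_inner_self_eq_norm_sq, ← mul_pow]
  exact pow_le_pow_left₀ (by positivity) hlower 2

theorem stmt3 {U W : Type*}
    [NormedAddCommGroup U] [InnerProductSpace ℝ U] [CompleteSpace U]
    [NormedAddCommGroup W] [InnerProductSpace ℝ W] [CompleteSpace W]
    (B : W →ₗ[ℝ] U →ₗ[ℝ] ℝ) (C₃ : ℝ) (hC₃ : 0 < C₃)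
    (hinfsup : ∀ u : U, C₃ * ‖u‖ ≤ ⨆ w : {w : W // w ≠ 0}, B w.1 u / ‖w.1‖)
    (T : U → W) (hT : ∀ (w : W) (u : U), ⟪w, T u⟫ = B w u) :
    ∀ u : U, C₃ ^ 2 * ‖u‖ ^ 2 ≤ ⟪T u, T u⟫ :=
  stmt3_general B C₃ hC₃ hinfsup T hT
end

section
/- Suppose B satisfies the three conditions: continuity with constant C₁, inf-sup over u with constant C₂, and inf-sup over w with constant C₃ (all positive). Equip W with the optimal test space norm |||w|||_W := ‖T*w‖_U. Then for every u ∈ U, the energy norm with respect to this test norm equals the original trial norm: sup over nonzero w ∈ W of B(w,u)/|||w|||_W = ‖u‖_U. -/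
open scoped RealInnerProductSpace

/-!
The inf-sup condition in `w` says that no nonzero `u` is orthogonal to every `T* w`, so `T*` has
dense range in the Hilbert space `U`. The quotient `⟪T* w, u⟫ / ‖T* w‖` is at most `‖u‖` by
Cauchy–Schwarz, and at least `‖u‖ - 2 ‖u - T* w‖`; letting `T* w` approach `u` gives the equality.
-/

section InnerDivNorm

variable {U : Type*} [NormedAddCommGroup U] [InnerProductSpace ℝ U]

theorem real_inner_div_norm_le_norm (u v : U) : ⟪v, u⟫ / ‖v‖ ≤ ‖u‖ := by
  rcases eq_or_ne v 0 with rfl | hv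
  · simp
  · rw [div_le_iff₀ (norm_pos_iff.mpr hv), mul_comm]
    exact real_inner_le_norm v u

theorem norm_sub_two_mul_norm_sub_le_real_inner_div_norm (u v : U) :
    ‖u‖ - 2 * ‖u - v‖ ≤ ⟪v, u⟫ / ‖v‖ := by
  rcases eq_or_ne v 0 with rfl | hv
  · simp [two_mul]
  rw [le_div_iff₀ (norm_pos_iff.mpr hv)]
  have h_inner : ‖u‖ ^ 2 - ‖u - v‖ * ‖u‖ ≤ ⟪v, u⟫ := by
    have : ⟪v, u⟫ = ‖u‖ ^ 2 - ⟪u - v, u⟫ := by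
      rw [inner_sub_left, real_inner_self_eq_norm_sq]; ring
    rw [this]
    linarith [real_inner_le_norm (u - v) u]
  have h_cs : -(‖v‖ * ‖u‖) ≤ ⟪v, u⟫ := by
    linarith [abs_le.mp (abs_real_inner_le_norm v u)]
  have h_tri : ‖v‖ ≤ ‖u‖ + ‖u - v‖ := by
    simpa using norm_sub_le u (u - v)
  have hd := norm_nonneg (u - v)
  have hv' := norm_nonneg v
  rcases le_total ‖u - v‖ ‖u‖ with h | h
  · rcases le_total 0 (‖u‖ - 2 * ‖u - v‖) with h' | h'
    · nlinarith [mul_le_mul_of_nonneg_left h_tri h']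
    · nlinarith [mul_nonpos_of_nonpos_of_nonneg h' hv',
        mul_nonneg (norm_nonneg u) (sub_nonneg.mpr h)]
  · nlinarith [mul_le_mul_of_nonneg_right (show ‖u‖ - 2 * ‖u - v‖ ≤ -‖u‖ by linarith) hv']

end InnerDivNorm

section DenseRange

variable {U W : Type*} [NormedAddCommGroup U] [InnerProductSpace ℝ U]
  [AddCommGroup W] [Module ℝ W]

theorem LinearMap.denseRange_of_forall_inner_eq_zero [CompleteSpace U] (T : W →ₗ[ℝ] U)
    (hT : ∀ u : U, (∀ w, ⟪T w, u⟫ = 0) → u = 0) : DenseRange T := by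
  change Dense (LinearMap.range T : Set U)
  rw [Submodule.dense_iff_topologicalClosure_eq_top, Submodule.topologicalClosure_eq_top_iff,
    Submodule.eq_bot_iff]
  rintro u hu
  exact hT u fun w => (Submodule.mem_orthogonal _ u).mp hu (T w) ⟨w, rfl⟩

theorem LinearMap.iSup_real_inner_div_norm_eq_norm (T : W →ₗ[ℝ] U) (hT : DenseRange T) (u : U) :
    ⨆ w : {w : W // w ≠ 0}, ⟪T w.1, u⟫ / ‖T w.1‖ = ‖u‖ := by
  rcases eq_or_ne u 0 with rfl | hu
  · simp
  have hle : ∀ w : {w : W // w ≠ 0}, ⟪T w.1, u⟫ / ‖T w.1‖ ≤ ‖u‖ := fun w =>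
    real_inner_div_norm_le_norm u (T w)
  refine le_antisymm (Real.iSup_le hle (norm_nonneg u)) (le_of_forall_lt fun c hc => ?_)
  obtain ⟨w, hw⟩ := Metric.denseRange_iff.mp hT u (min ((‖u‖ - c) / 2) ‖u‖)
    (lt_min (by linarith) (norm_pos_iff.mpr hu))
  rw [dist_eq_norm] at hw
  -- `‖u - T w‖ < ‖u‖` forces `T w ≠ 0`.
  have hw0 : w ≠ 0 := by
    rintro rfl
    simpa using hw.trans_le (min_le_right _ _)
  calc c < ‖u‖ - 2 * ‖u - T w‖ := by linarith [hw.trans_le (min_le_left _ _)]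
    _ ≤ ⟪T w, u⟫ / ‖T w‖ := norm_sub_two_mul_norm_sub_le_real_inner_div_norm u (T w)
    _ ≤ _ := le_ciSup ⟨‖u‖, Set.forall_mem_range.mpr hle⟩ (⟨w, hw0⟩ : {w : W // w ≠ 0})

end DenseRange

section BilinearForm

variable {U W : Type*} [NormedAddCommGroup U] [InnerProductSpace ℝ U]

def LinearMap.ofInnerEq [AddCommGroup W] [Module ℝ W] (B : W →ₗ[ℝ] U →ₗ[ℝ] ℝ) (T : W → U)
    (hT : ∀ w u, ⟪T w, u⟫ = B w u) : W →ₗ[ℝ] U where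
  toFun := T
  map_add' w w' := ext_inner_right ℝ fun u => by simp [hT, inner_add_left]
  map_smul' c w := ext_inner_right ℝ fun u => by simp [hT, real_inner_smul_left]

theorem eq_zero_of_forall_apply_eq_zero_of_infSup [NormedAddCommGroup W] [InnerProductSpace ℝ W]
    (B : W →ₗ[ℝ] U →ₗ[ℝ] ℝ) {C : ℝ} (hC : 0 < C)
    (hinfsup : ∀ u : U, C * ‖u‖ ≤ ⨆ w : {w : W // w ≠ 0}, B w.1 u / ‖w.1‖) {u : U}
    (hu : ∀ w, B w u = 0) : u = 0 := by
  have h := hinfsup u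
  simp only [hu, zero_div, Real.iSup_const_zero] at h
  exact norm_le_zero_iff.mp (nonpos_of_mul_nonpos_right h hC)

end BilinearForm

theorem stmt9_general {U W : Type*}
    [NormedAddCommGroup U] [InnerProductSpace ℝ U] [CompleteSpace U]
    [NormedAddCommGroup W] [InnerProductSpace ℝ W]
    (B : W →ₗ[ℝ] U →ₗ[ℝ] ℝ) (C₃ : ℝ)
    (hC₃ : 0 < C₃)
    (hinfsup₃ : ∀ u : U, C₃ * ‖u‖ ≤ ⨆ w : {w : W // w ≠ 0}, B w.1 u / ‖w.1‖)
    (Ts : W → U) (hTs : ∀ (w : W) (u : U), ⟪Ts w, u⟫ = B w u) :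
    ∀ u : U, (⨆ w : {w : W // w ≠ 0}, B w.1 u / ‖Ts w.1‖) = ‖u‖ := by
  let T := LinearMap.ofInnerEq B Ts hTs
  have hT : DenseRange T := T.denseRange_of_forall_inner_eq_zero fun u hu =>
    eq_zero_of_forall_apply_eq_zero_of_infSup B hC₃ hinfsup₃ fun w => (hTs w u).symm.trans (hu w)
  intro u
  simp_rw [← hTs]
  exact T.iSup_real_inner_div_norm_eq_norm hT u

theorem stmt9 {U W : Type*}
    [NormedAddCommGroup U] [InnerProductSpace ℝ U] [CompleteSpace U]
    [NormedAddCommGroup W] [InnerProductSpace ℝ W] [CompleteSpace W]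
    (B : W →ₗ[ℝ] U →ₗ[ℝ] ℝ) (C₁ C₂ C₃ : ℝ)
    (hC₁ : 0 < C₁) (hC₂ : 0 < C₂) (hC₃ : 0 < C₃)
    (hB : ∀ (w : W) (u : U), B w u ≤ C₁ * ‖w‖ * ‖u‖)
    (hinfsup₂ : ∀ w : W, C₂ * ‖w‖ ≤ ⨆ u : {u : U // u ≠ 0}, B w u.1 / ‖u.1‖)
    (hinfsup₃ : ∀ u : U, C₃ * ‖u‖ ≤ ⨆ w : {w : W // w ≠ 0}, B w.1 u / ‖w.1‖)
    (Ts : W → U) (hTs : ∀ (w : W) (u : U), ⟪Ts w, u⟫ = B w u) :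
    ∀ u : U, (⨆ w : {w : W // w ≠ 0}, B w.1 u / ‖Ts w.1‖) = ‖u‖ :=
  stmt9_general B C₃ hC₃ hinfsup₃ Ts hTs
end

section
/- Under the conditions of the preceding setting, the operator T* : W → U is surjective. -/
/-!
The bound by `C₁` makes `Ts` a bounded operator `T`, and the inf-sup condition over `w` says
that its adjoint `T†` is bounded below. Then `T T†` is a self-adjoint operator that is bounded
below, so its range is closed and its orthogonal complement `ker (T T†)` is trivial; hence `T T†`,
and a fortiori `T`, is surjective.
-/

open scoped InnerProductSpace NNReal

namespace ContinuousLinearMap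

section

variable {𝕜 E F : Type*} [RCLike 𝕜]
  [NormedAddCommGroup E] [InnerProductSpace 𝕜 E] [CompleteSpace E]
  [NormedAddCommGroup F] [InnerProductSpace 𝕜 F] [CompleteSpace F]

theorem surjective_of_antilipschitz_of_injective_adjoint {T : E →L[𝕜] F} {K : ℝ≥0}
    (hT : AntilipschitzWith K T) (hT' : Function.Injective (adjoint T)) :
    Function.Surjective T := by
  have : CompleteSpace T.range := (hT.isClosed_range T.uniformContinuous).completeSpace_coe
  refine LinearMap.range_eq_top.mp ?_
  rw [← Submodule.orthogonal_eq_bot_iff, orthogonal_range, LinearMap.ker_eq_bot]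
  exact hT'

theorem norm_adjoint_apply_sq_le (T : E →L[𝕜] F) (u : F) :
    ‖adjoint T u‖ ^ 2 ≤ ‖T (adjoint T u)‖ * ‖u‖ :=
  calc ‖adjoint T u‖ ^ 2 = RCLike.re ⟪u, T (adjoint T u)⟫_𝕜 := by
        rw [← adjoint_inner_left, inner_self_eq_norm_sq]
    _ ≤ ‖u‖ * ‖T (adjoint T u)‖ := re_inner_le_norm _ _
    _ = ‖T (adjoint T u)‖ * ‖u‖ := mul_comm _ _

theorem antilipschitz_comp_adjoint {T : E →L[𝕜] F} {K : ℝ≥0}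
    (hT : AntilipschitzWith K (adjoint T)) : AntilipschitzWith (K ^ 2) (T ∘L adjoint T) := by
  refine antilipschitz_of_bound _ fun u => ?_
  rcases (norm_nonneg u).eq_or_lt with hu | hu
  · rw [← hu]; positivity
  have : ‖u‖ * ‖u‖ ≤ K ^ 2 * ‖T (adjoint T u)‖ * ‖u‖ :=
    calc ‖u‖ * ‖u‖ ≤ (K * ‖adjoint T u‖) ^ 2 := by
          rw [← sq]; gcongr; exact (adjoint T).bound_of_antilipschitz hT u
      _ = K ^ 2 * ‖adjoint T u‖ ^ 2 := mul_pow _ _ _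
      _ ≤ K ^ 2 * ‖T (adjoint T u)‖ * ‖u‖ := by
        rw [mul_assoc]; gcongr; exact norm_adjoint_apply_sq_le T u
  push_cast
  exact le_of_mul_le_mul_right this hu

theorem surjective_of_antilipschitz_adjoint {T : E →L[𝕜] F} {K : ℝ≥0}
    (hT : AntilipschitzWith K (adjoint T)) : Function.Surjective T := by
  have hTT := antilipschitz_comp_adjoint hT
  have hself : adjoint (T ∘L adjoint T) = T ∘L adjoint T := by
    rw [adjoint_comp, adjoint_adjoint]
  have := surjective_of_antilipschitz_of_injective_adjoint hTT (by rw [hself]; exact hTT.injective)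
  exact Function.Surjective.of_comp this

end

section Real

variable {E F : Type*}
  [NormedAddCommGroup E] [InnerProductSpace ℝ E] [CompleteSpace E]
  [NormedAddCommGroup F] [InnerProductSpace ℝ F] [CompleteSpace F]

theorem antilipschitz_adjoint_of_le_iSup_inner_div_norm (T : E →L[ℝ] F) {C : ℝ} (hC : 0 < C)
    (h : ∀ u : F, C * ‖u‖ ≤ ⨆ w : {w : E // w ≠ 0}, ⟪T w.1, u⟫_ℝ / ‖w.1‖) :
    AntilipschitzWith (C⁻¹).toNNReal (adjoint T) := by
  refine antilipschitz_of_bound _ fun u => ?_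
  have hsup : (⨆ w : {w : E // w ≠ 0}, ⟪T w.1, u⟫_ℝ / ‖w.1‖) ≤ ‖adjoint T u‖ := by
    refine Real.iSup_le (fun w => ?_) (norm_nonneg _)
    rw [div_le_iff₀ (norm_pos_iff.mpr w.2), ← adjoint_inner_right, mul_comm]
    exact real_inner_le_norm _ _
  rw [Real.coe_toNNReal _ (inv_nonneg.mpr hC.le), inv_mul_eq_div, le_div_iff₀ hC, mul_comm]
  exact (h u).trans hsup

end Real

end ContinuousLinearMap

open scoped RealInnerProductSpace

theorem exists_continuousLinearMap_coe_eq_of_inner_eq {E F : Type*}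
    [NormedAddCommGroup E] [InnerProductSpace ℝ E] [NormedAddCommGroup F] [InnerProductSpace ℝ F]
    (B : E →ₗ[ℝ] F →ₗ[ℝ] ℝ) {C : ℝ} (hC : 0 ≤ C) (hB : ∀ (w : E) (u : F), B w u ≤ C * ‖w‖ * ‖u‖)
    (f : E → F) (hf : ∀ (w : E) (u : F), ⟪f w, u⟫ = B w u) :
    ∃ T : E →L[ℝ] F, ⇑T = f := by
  have hlin : IsLinearMap ℝ f :=
    { map_add := fun w₁ w₂ => ext_inner_right ℝ fun u => by
        rw [inner_add_left, hf, hf, hf, map_add, LinearMap.add_apply]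
      map_smul := fun c w => ext_inner_right ℝ fun u => by
        rw [real_inner_smul_left, hf, hf, map_smul, LinearMap.smul_apply, smul_eq_mul] }
  have hbound (w : E) : ‖f w‖ ≤ C * ‖w‖ := by
    rcases (norm_nonneg (f w)).eq_or_lt with h0 | hpos
    · rw [← h0]; positivity
    refine le_of_mul_le_mul_right ?_ hpos
    calc ‖f w‖ * ‖f w‖ = B w (f w) := by rw [← hf, real_inner_self_eq_norm_mul_norm]
      _ ≤ C * ‖w‖ * ‖f w‖ := hB w (f w)
  exact ⟨(IsLinearMap.mk' f hlin).mkContinuous C hbound, rfl⟩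

theorem stmt10_general {U W : Type*}
    [NormedAddCommGroup U] [InnerProductSpace ℝ U] [CompleteSpace U]
    [NormedAddCommGroup W] [InnerProductSpace ℝ W] [CompleteSpace W]
    (B : W →ₗ[ℝ] U →ₗ[ℝ] ℝ) (C₁ C₃ : ℝ)
    (hC₁ : 0 < C₁) (hC₃ : 0 < C₃)
    (hB : ∀ (w : W) (u : U), B w u ≤ C₁ * ‖w‖ * ‖u‖)
    (hinfsup₃ : ∀ u : U, C₃ * ‖u‖ ≤ ⨆ w : {w : W // w ≠ 0}, B w.1 u / ‖w.1‖)
    (Ts : W → U) (hTs : ∀ (w : W) (u : U), ⟪Ts w, u⟫ = B w u) :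
    Function.Surjective Ts := by
  obtain ⟨T, rfl⟩ := exists_continuousLinearMap_coe_eq_of_inner_eq B hC₁.le hB Ts hTs
  refine T.surjective_of_antilipschitz_adjoint
    (T.antilipschitz_adjoint_of_le_iSup_inner_div_norm hC₃ fun u => ?_)
  simpa only [hTs] using hinfsup₃ u

theorem stmt10 {U W : Type*}
    [NormedAddCommGroup U] [InnerProductSpace ℝ U] [CompleteSpace U]
    [NormedAddCommGroup W] [InnerProductSpace ℝ W] [CompleteSpace W]
    (B : W →ₗ[ℝ] U →ₗ[ℝ] ℝ) (C₁ C₂ C₃ : ℝ)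
    (hC₁ : 0 < C₁) (hC₂ : 0 < C₂) (hC₃ : 0 < C₃)
    (hB : ∀ (w : W) (u : U), B w u ≤ C₁ * ‖w‖ * ‖u‖)
    (hinfsup₂ : ∀ w : W, C₂ * ‖w‖ ≤ ⨆ u : {u : U // u ≠ 0}, B w u.1 / ‖u.1‖)
    (hinfsup₃ : ∀ u : U, C₃ * ‖u‖ ≤ ⨆ w : {w : W // w ≠ 0}, B w.1 u / ‖w.1‖)
    (Ts : W → U) (hTs : ∀ (w : W) (u : U), ⟪Ts w, u⟫ = B w u) :
    Function.Surjective Ts :=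
  stmt10_general B C₁ C₃ hC₁ hC₃ hB hinfsup₃ Ts hTs
end
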